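/- The language accepted by an automaton obtained from the modified Thompson construction (in which all intermediate final states of the basis rules are kept final) is prefix-closed: if a word w is accepted, then every prefix of w is also accepted. -/
import Mathlib


/-- A language is prefix-closed if every prefix of every word in it is in it. -/
def PrefixClosed {α : Type} (L : Language α) : Prop :=
  ∀ w ∈ L, ∀ u : List α, u <+: w → u ∈ L

/-- Languages of automata built by the modified Thompson construction: the
basis automata accept prefix-closed languages containing the empty word, and
the inductive rules are union, Kleene star, and the modified concatenation
`L₁ ∪ L₁·L₂` (final states of the first operand remain final). -/
inductive ThompsonLang {α : Type} : Language α → Prop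
  | basis (L : Language α) : PrefixClosed L → ([] : List α) ∈ L → ThompsonLang L
  | union {L₁ L₂ : Language α} :
      ThompsonLang L₁ → ThompsonLang L₂ → ThompsonLang (L₁ + L₂)
  | star {L : Language α} : ThompsonLang L → ThompsonLang (KStar.kstar L)
  | concat {L₁ L₂ : Language α} :
      ThompsonLang L₁ → ThompsonLang L₂ → ThompsonLang (L₁ + L₁ * L₂)

lemma prefix_append_cases {α : Type} {u x y : List α} (h : u <+: x ++ y) :
    u <+: x ∨ ∃ v, v <+: y ∧ u = x ++ v := by
  rcases le_or_gt u.length x.length with hle | hlt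
  · left
    exact ((List.isPrefix_append_of_length hle).mp h)
  · right
    obtain ⟨t, ht⟩ := h
    refine ⟨u.drop x.length, ⟨t, ?_⟩, ?_⟩
    · have := congrArg (List.drop x.length) ht
      simpa [List.drop_append, List.drop_of_length_le (le_of_lt hlt),
        Nat.sub_eq_zero_of_le (le_of_lt hlt)] using this
    · have hx : x <+: u := by
        have : x <+: x ++ y := List.prefix_append x y
        exact List.prefix_of_prefix_length_le this ⟨t, ht⟩ (le_of_lt hlt)
      obtain ⟨s, hs⟩ := hx
      subst hs
      simp

lemma star_prefix {α : Type} {L : Language α} (hL : PrefixClosed L) :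
    ∀ (ws : List (List α)), (∀ x ∈ ws, x ∈ L) →
      ∀ u : List α, u <+: ws.flatten → u ∈ KStar.kstar L := by
  intro ws
  induction ws with
  | nil =>
    intro _ u hu
    simp only [List.flatten_nil, List.prefix_nil] at hu
    subst hu
    exact Language.nil_mem_kstar L
  | cons a ws ih =>
    intro hmem u hu
    simp only [List.flatten_cons] at hu
    rcases prefix_append_cases hu with h | ⟨v, hv, rfl⟩
    · have : u ∈ L := hL a (hmem a (by simp)) u h
      exact Language.mem_kstar.mpr ⟨[u], by simp, by simpa⟩
    · have hv' : v ∈ KStar.kstar L := ih (fun x hx => hmem x (by simp [hx])) v hv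
      obtain ⟨vs, rfl, hvs⟩ := Language.mem_kstar.mp hv'
      exact Language.mem_kstar.mpr ⟨a :: vs, by simp, by
        intro y hy
        rcases List.mem_cons.mp hy with rfl | hy
        · exact hmem y (by simp)
        · exact hvs y hy⟩

/-- The language accepted by a modified-Thompson automaton is prefix-closed
(and contains the empty word). -/
theorem thompsonLang_prefixClosed {α : Type} {L : Language α}
    (h : ThompsonLang L) : PrefixClosed L ∧ ([] : List α) ∈ L := by
  induction h with
  | basis L hpc hnil => exact ⟨hpc, hnil⟩
  | union h1 h2 ih1 ih2 =>
    refine ⟨?_, Or.inl ih1.2⟩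
    rintro w (hw | hw) u hu
    · exact Or.inl (ih1.1 w hw u hu)
    · exact Or.inr (ih2.1 w hw u hu)
  | star h ih =>
    refine ⟨?_, Language.nil_mem_kstar _⟩
    intro w hw u hu
    obtain ⟨ws, rfl, hws⟩ := Language.mem_kstar.mp hw
    exact star_prefix ih.1 ws hws u hu
  | concat h1 h2 ih1 ih2 =>
    refine ⟨?_, Or.inl ih1.2⟩
    rintro w (hw | hw) u hu
    · exact Or.inl (ih1.1 w hw u hu)
    · obtain ⟨x, hx, y, hy, rfl⟩ := hw
      rcases prefix_append_cases hu with h | ⟨v, hv, rfl⟩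
      · exact Or.inl (ih1.1 x hx u h)
      · exact Or.inr ⟨x, hx, v, ih2.1 y hy v hv, rfl⟩
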